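/- arXiv:2102.10416 — 6 statements merged into one kernel-verified Lean document; each statement's English description precedes it below -/
import Mathlib

section
/- For every non-regular language L over a finite nonempty alphabet Σ there exists an infinite word a₁a₂a₃⋯ ∈ Σ^ω (i.e., a function a : ℕ → Σ) such that the left quotients of L by distinct finite prefixes are pairwise distinct: for all i ≠ j, (a₁a₂⋯a_i)\L ≠ (a₁a₂⋯a_j)\L. -/
/-- The left quotient of `L` by the word `u`: `u \ L = {v | u · v ∈ L}`. -/
def leftQuotient {α : Type} (u : List α) (L : Set (List α)) : Set (List α) :=
  {v | u ++ v ∈ L}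

/-!
Call a word *shortest* if no shorter word has the same left quotient of `L`. Since
`(u ++ t)\L` depends only on `u\L`, prefixes of shortest words are shortest, so the shortest
words form a prefix-closed tree; it is finitely branching because the alphabet is finite, and
infinite because every quotient has a shortest representative and, by Myhill–Nerode, a
non-regular language has infinitely many quotients. Kőnig's lemma gives an infinite branch
`a`. All prefixes of `a` are shortest words, and shortest words with the same quotient have
the same length, so prefixes of different lengths have different quotients.
-/

section Konig

variable {α : Type*} {S : Set (List α)}

theorem List.IsPrefix.eq_or_exists_append_singleton_isPrefix {u w : List α} (h : u <+: w) :
    w = u ∨ ∃ a, u ++ [a] <+: w := by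
  obtain ⟨_ | ⟨a, t⟩, rfl⟩ := h
  · simp
  · exact Or.inr ⟨a, t, by simp⟩

theorem exists_infinite_setOf_append_singleton_isPrefix [Finite α] {u : List α}
    (hu : {w ∈ S | u <+: w}.Infinite) : ∃ a, {w ∈ S | u ++ [a] <+: w}.Infinite := by
  by_contra! hfin
  refine hu (((Set.finite_iUnion hfin).insert u).subset ?_)
  rintro w ⟨hw, huw⟩
  rcases huw.eq_or_exists_append_singleton_isPrefix with rfl | ⟨a, ha⟩
  · exact Set.mem_insert _ _
  · exact Set.mem_insert_of_mem _ (Set.mem_iUnion.2 ⟨a, hw, ha⟩)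

/-- Kőnig's lemma for prefix-closed sets of words over a finite alphabet. -/
theorem exists_seq_forall_map_range_mem [Finite α] (hS : S.Infinite)
    (hpre : ∀ ⦃u w⦄, w ∈ S → u <+: w → u ∈ S) :
    ∃ a : ℕ → α, ∀ n, (List.range n).map a ∈ S := by
  let E := {u : List α // {w ∈ S | u <+: w}.Infinite}
  choose next hnext using fun u : E => exists_infinite_setOf_append_singleton_isPrefix u.2
  let branch : ℕ → E := fun n =>
    (fun u => ⟨u.1 ++ [next u], hnext u⟩)^[n] ⟨[], by simpa using hS⟩
  refine ⟨fun n => next (branch n), fun n => ?_⟩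
  have hbranch : (List.range n).map (fun n => next (branch n)) = (branch n).1 := by
    induction n with
    | zero => rfl
    | succ n ih =>
      rw [List.range_succ, List.map_append, ih]
      simp only [branch, Function.iterate_succ_apply', List.map_cons, List.map_nil]
  obtain ⟨w, hw, hbw⟩ := (branch n).2.nonempty
  exact hbranch ▸ hpre hw hbw

end Konig

namespace Language

variable {σ : Type*} {L : Language σ}

variable (L) in
def IsShortestRep (u : List σ) : Prop :=
  ∀ v, L.leftQuotient v = L.leftQuotient u → u.length ≤ v.length

theorem IsShortestRep.of_isPrefix {u w : List σ} (hw : L.IsShortestRep w) (huw : u <+: w) :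
    L.IsShortestRep u := by
  obtain ⟨t, rfl⟩ := huw
  intro v hv
  have := hw (v ++ t) (by rw [leftQuotient_append, leftQuotient_append, hv])
  simp only [List.length_append] at this
  omega

theorem IsShortestRep.length_eq {u v : List σ} (hu : L.IsShortestRep u)
    (hv : L.IsShortestRep v) (huv : L.leftQuotient u = L.leftQuotient v) :
    u.length = v.length :=
  le_antisymm (hu v huv.symm) (hv u huv)

variable (L) in
theorem exists_isShortestRep_leftQuotient_eq (u : List σ) :
    ∃ v, L.IsShortestRep v ∧ L.leftQuotient v = L.leftQuotient u := by
  obtain ⟨v, hv, hmin⟩ := (measure List.length).wf.has_min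
    {v | L.leftQuotient v = L.leftQuotient u} ⟨u, rfl⟩
  exact ⟨v, fun w hw => not_lt.1 fun hlt => hmin w (hw.trans hv) hlt, hv⟩

theorem infinite_setOf_isShortestRep (hL : ¬ L.IsRegular) :
    {u | L.IsShortestRep u}.Infinite := by
  refine fun hfin => hL (.of_finite_range_leftQuotient ((hfin.image L.leftQuotient).subset ?_))
  rintro _ ⟨u, rfl⟩
  exact L.exists_isShortestRep_leftQuotient_eq u

end Language

theorem exists_infinite_word_with_distinct_quotients_general
    {σ : Type} [Fintype σ] (L : Language σ)
    (hL : ¬ L.IsRegular) :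
    ∃ a : ℕ → σ, ∀ i j : ℕ, i ≠ j →
      leftQuotient ((List.range i).map a) L ≠ leftQuotient ((List.range j).map a) L := by
  obtain ⟨a, ha⟩ := exists_seq_forall_map_range_mem (Language.infinite_setOf_isShortestRep hL)
    fun _ _ hw => hw.of_isPrefix
  refine ⟨a, fun i j hij heq => hij ?_⟩
  simpa using (ha i).length_eq (ha j) heq

/-- For every non-regular language `L` over a finite nonempty alphabet `σ` there is an
infinite word `a : ℕ → σ` whose distinct finite prefixes have pairwise distinct
left quotients of `L`. -/
theorem exists_infinite_word_with_distinct_quotients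
    {σ : Type} [Fintype σ] [Nonempty σ] (L : Language σ)
    (hL : ¬ L.IsRegular) :
    ∃ a : ℕ → σ, ∀ i j : ℕ, i ≠ j →
      leftQuotient ((List.range i).map a) L ≠ leftQuotient ((List.range j).map a) L :=
  exists_infinite_word_with_distinct_quotients_general L hL
end

section
/- The relation ≤^A of truth-table reducibility by Mealy machines is transitive: for languages L₁ ⊆ Σ*, L₂ ⊆ Δ*, L₃ ⊆ Θ* over finite nonempty alphabets, if L₁ ≤^A L₂ and L₂ ≤^A L₃, then L₁ ≤^A L₃. -/
/-- A Mealy machine with oracle: finite state set `Q`, start state `q0`,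
partial transition function `step`, output function `out`, and for each state `q`
a tuple of `numSuf q` query suffixes `suf q` together with a truth table `tt q`. -/
structure OracleMealy (α : Type) (β : Type) where
  Q : Type
  [fintypeQ : Fintype Q]
  q0 : Q
  step : Q → α → Option Q
  out : Q → α → List β
  numSuf : Q → ℕ
  suf : (q : Q) → Fin (numSuf q) → List β
  tt : (q : Q) → (Fin (numSuf q) → Bool) → Bool

namespace OracleMealy

variable {α β : Type}

/-- Running the machine on input `w` from the start state, returning the final state
together with the string written on the oracle tape (`none` if a transition is undefined). -/
def run (M : OracleMealy α β) (w : List α) : Option (M.Q × List β) :=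
  w.foldl
    (fun s a => s.bind fun qo => (M.step qo.1 a).map fun q' => (q', qo.2 ++ M.out qo.1 a))
    (some (M.q0, []))

open Classical in
/-- The machine `M` with oracle `L` accepts `w` iff the run on `w` is defined, ending in a
state `p` with output `o`, and the truth table of `p` applied to the answers of the oracle
queries `o ++ M.suf p i ∈ L` yields `true`. -/
def Accepts (M : OracleMealy α β) (L : Set (List β)) (w : List α) : Prop :=
  ∃ p o, M.run w = some (p, o) ∧
    M.tt p (fun i => decide (o ++ M.suf p i ∈ L)) = true

end OracleMealy

/-- `L₁ ≤^A L₂`: truth-table reducibility by Mealy machines. -/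
def MealyTTReducible (L₁ : Set (List α)) (L₂ : Set (List β)) : Prop :=
  ∃ M : OracleMealy α β, ∀ w : List α, w ∈ L₁ ↔ M.Accepts L₂ w

/-- The language `L_# = {0^n 1^n | n ≥ 1}` over the alphabet `{0,1}` (`false` = 0, `true` = 1). -/
def Lsharp : Set (List Bool) :=
  {w | ∃ n : ℕ, 1 ≤ n ∧ w = List.replicate n false ++ List.replicate n true}

/-!
If `M₁` reduces `L₁` to `L₂` and `M₂` reduces `L₂` to `L₃`, let `M₂` run on the fly on the tape
written by `M₁`, its state stored next to that of `M₁`. When `M₁` stops with tape `o₁` and asks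
whether `o₁ ++ s ∈ L₂`, the answer is what `M₂` computes after reading `o₁ ++ s`; since `s` depends
only on the state of `M₁`, the continuation of `M₂` on `s` is fixed by the pair of states, and the
questions `M₂` then asks of `L₃` are the composite's tape followed by suffixes known in that state.
An undefined transition of `M₂` sends it to a dead state, in which every such answer is `false`.
-/

namespace OracleMealy

variable {α β γ : Type}

section Completion

variable (M : OracleMealy α β)

/-- `M` with an extra dead state `none`, entered at an undefined transition, which reads everything,
writes nothing, has no queries and rejects; the second component accumulates the oracle tape. -/
def stepOpt (x : Option M.Q × List β) (a : α) : Option M.Q × List β :=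
  (x.1.bind (M.step · a), x.2 ++ (x.1.map (M.out · a)).getD [])

def runOpt (r : Option M.Q) (w : List α) : Option M.Q × List β :=
  w.foldl M.stepOpt (r, [])

def numSufOpt : Option M.Q → ℕ
  | none => 0
  | some q => M.numSuf q

def sufOpt : (r : Option M.Q) → Fin (M.numSufOpt r) → List β
  | none => Fin.elim0
  | some q => M.suf q

def ttOpt : (r : Option M.Q) → (Fin (M.numSufOpt r) → Bool) → Bool
  | none => fun _ => false
  | some q => M.tt q

open Classical in
noncomputable def acceptsOpt (L : Set (List β)) (x : Option M.Q × List β) : Bool :=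
  M.ttOpt x.1 fun j => decide (x.2 ++ M.sufOpt x.1 j ∈ L)

theorem run_eq_runOpt (w : List α) :
    M.run w = (M.runOpt (some M.q0) w).1.map ((·, (M.runOpt (some M.q0) w).2)) := by
  unfold run runOpt
  refine List.foldl_hom (fun x : Option M.Q × List β => x.1.map ((·, x.2)))
    (init := (some M.q0, [])) fun x a => ?_
  rcases x with ⟨_ | q, o⟩
  · rfl
  · cases M.step q a <;> rfl

theorem runOpt_append (r : Option M.Q) (u v : List α) :
    M.runOpt r (u ++ v) =
      ((M.runOpt (M.runOpt r u).1 v).1, (M.runOpt r u).2 ++ (M.runOpt (M.runOpt r u).1 v).2) := by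
  rw [runOpt, List.foldl_append]
  -- prepending to the tape commutes with every step
  have hom := List.foldl_hom (fun x : Option M.Q × List β => (x.1, (M.runOpt r u).2 ++ x.2))
    (g₁ := M.stepOpt) (g₂ := M.stepOpt) (l := v) (init := ((M.runOpt r u).1, []))
    fun x a => by simp only [stepOpt, List.append_assoc]
  rw [List.append_nil] at hom
  exact hom

open Classical in
theorem accepts_iff_of_run_eq_some {L : Set (List β)} {w : List α} {p : M.Q} {o : List β}
    (h : M.run w = some (p, o)) :
    M.Accepts L w ↔ M.tt p (fun i => decide (o ++ M.suf p i ∈ L)) = true := by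
  simp [Accepts, h]

theorem accepts_iff_acceptsOpt (L : Set (List β)) (w : List α) :
    M.Accepts L w ↔ M.acceptsOpt L (M.runOpt (some M.q0) w) = true := by
  rcases hw : M.runOpt (some M.q0) w with ⟨_ | q, o⟩
  · simp [Accepts, run_eq_runOpt, hw, acceptsOpt, ttOpt]
  · exact M.accepts_iff_of_run_eq_some (by rw [run_eq_runOpt, hw]; rfl)

end Completion

def compSuf (M₁ : OracleMealy α β) (M₂ : OracleMealy β γ) (p : M₁.Q) (r : Option M₂.Q)
    (s : (i : Fin (M₁.numSuf p)) × Fin (M₂.numSufOpt (M₂.runOpt r (M₁.suf p i)).1)) : List γ :=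
  (M₂.runOpt r (M₁.suf p s.1)).2 ++ M₂.sufOpt _ s.2

/-- `M₂` runs on the tape that `M₁` writes. In state `(p, r)`, query `finSigmaFinEquiv ⟨i, j⟩` is the
`j`-th query of `M₂` after reading the `i`-th query suffix of `M₁` from `r`. -/
def comp (M₁ : OracleMealy α β) (M₂ : OracleMealy β γ) : OracleMealy α γ where
  Q := M₁.Q × Option M₂.Q
  fintypeQ := letI := M₁.fintypeQ; letI := M₂.fintypeQ; inferInstance
  q0 := (M₁.q0, some M₂.q0)
  step x a := (M₁.step x.1 a).map ((·, (M₂.runOpt x.2 (M₁.out x.1 a)).1))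
  out x a := (M₂.runOpt x.2 (M₁.out x.1 a)).2
  numSuf x := ∑ i, M₂.numSufOpt (M₂.runOpt x.2 (M₁.suf x.1 i)).1
  suf x k := compSuf M₁ M₂ x.1 x.2 (finSigmaFinEquiv.symm k)
  tt x g := M₁.tt x.1 fun i =>
    M₂.ttOpt (M₂.runOpt x.2 (M₁.suf x.1 i)).1 fun j => g (finSigmaFinEquiv ⟨i, j⟩)

variable (M₁ : OracleMealy α β) (M₂ : OracleMealy β γ)

theorem comp_run (w : List α) :
    (M₁.comp M₂).run w = (M₁.run w).map fun x =>
      ((x.1, (M₂.runOpt (some M₂.q0) x.2).1), (M₂.runOpt (some M₂.q0) x.2).2) := by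
  unfold run
  refine List.foldl_hom (init := some (M₁.q0, []))
    (fun x : Option (M₁.Q × List β) => x.map fun y =>
      ((y.1, (M₂.runOpt (some M₂.q0) y.2).1), (M₂.runOpt (some M₂.q0) y.2).2)) fun x a => ?_
  rcases x with _ | ⟨p, o⟩
  · rfl
  · simp only [comp, Option.map_some, Option.bind_some, Option.map_map]
    congr 1
    funext p'
    simp [runOpt_append]

open Classical in
theorem comp_tt (L₃ : Set (List γ)) (p : M₁.Q) (r : Option M₂.Q) (o : List γ) :
    (M₁.comp M₂).tt (p, r) (fun k => decide (o ++ (M₁.comp M₂).suf (p, r) k ∈ L₃)) =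
      M₁.tt p fun i =>
        M₂.acceptsOpt L₃ ((M₂.runOpt r (M₁.suf p i)).1, o ++ (M₂.runOpt r (M₁.suf p i)).2) := by
  simp only [comp, Equiv.symm_apply_apply]
  simp only [compSuf, acceptsOpt, List.append_assoc]
  rfl

theorem comp_accepts_iff {L₂ : Set (List β)} {L₃ : Set (List γ)}
    (h₂ : ∀ u, u ∈ L₂ ↔ M₂.Accepts L₃ u) (w : List α) :
    (M₁.comp M₂).Accepts L₃ w ↔ M₁.Accepts L₂ w := by
  classical
  have query (o₁ s : List β) : decide (o₁ ++ s ∈ L₂) =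
      M₂.acceptsOpt L₃ ((M₂.runOpt (M₂.runOpt (some M₂.q0) o₁).1 s).1,
        (M₂.runOpt (some M₂.q0) o₁).2 ++ (M₂.runOpt (M₂.runOpt (some M₂.q0) o₁).1 s).2) := by
    rw [Bool.eq_iff_iff, decide_eq_true_iff, h₂, accepts_iff_acceptsOpt, runOpt_append]
  rcases h₁ : M₁.run w with _ | ⟨p, o₁⟩
  · simp [Accepts, comp_run, h₁]
  · rw [accepts_iff_of_run_eq_some _ h₁, accepts_iff_of_run_eq_some _ (by rw [comp_run, h₁]; rfl),
      comp_tt]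
    simp only [query]

end OracleMealy

theorem mealyTTReducible_trans_general
    {σ Δ Θ : Type}
    (L₁ : Set (List σ)) (L₂ : Set (List Δ)) (L₃ : Set (List Θ))
    (h12 : MealyTTReducible L₁ L₂) (h23 : MealyTTReducible L₂ L₃) :
    MealyTTReducible L₁ L₃ := by
  obtain ⟨M₁, h₁⟩ := h12
  obtain ⟨M₂, h₂⟩ := h23
  exact ⟨M₁.comp M₂, fun w => (h₁ w).trans (M₁.comp_accepts_iff M₂ h₂ w).symm⟩

/-- Truth-table reducibility by Mealy machines is transitive. -/
theorem mealyTTReducible_trans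
    {σ Δ Θ : Type} [Fintype σ] [Nonempty σ] [Fintype Δ] [Nonempty Δ] [Fintype Θ] [Nonempty Θ]
    (L₁ : Set (List σ)) (L₂ : Set (List Δ)) (L₃ : Set (List Θ))
    (h12 : MealyTTReducible L₁ L₂) (h23 : MealyTTReducible L₂ L₃) :
    MealyTTReducible L₁ L₃ :=
  mealyTTReducible_trans_general L₁ L₂ L₃ h12 h23
end

section
/- The language L_R = {w·c·wᴿ | w ∈ {a,b}*} over the three-letter alphabet {a,b,c}, where wᴿ denotes the reversal of w, is NOT truth-table reducible by a Mealy machine to L_# = {0ⁿ1ⁿ | n ≥ 1}; that is, ¬(L_R ≤^A L_#). -/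
/-- The language `L_R = {w · c · wᴿ | w ∈ {a,b}*}` over the alphabet `{a,b,c}`,
encoded as `Fin 3` with `a = 0`, `b = 1`, `c = 2`. -/
def LR : Set (List (Fin 3)) :=
  {u | ∃ w : List (Fin 3), (∀ d ∈ w, d ≠ 2) ∧ u = w ++ [2] ++ w.reverse}

/-!
After reading `w·c`, the future behaviour of a machine reducing to `L` depends only on its
state and on the left quotient `(o ++ ·) ⁻¹' L` of `L` by its oracle tape `o`. The `2 ^ n`
prefixes `w·c` with `w ∈ {a,b}ⁿ` must lead to pairwise different such classes, because
`w'·c·wᴿ ∈ L_R` forces `w' = w`. But the tape has length `O(n)`, and every left quotient of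
`L_#` by a word is empty or the quotient by some `0ⁱ1ʲ`, so there are only `O(n²)` classes.
-/

namespace OracleMealy

variable {α β : Type} (M : OracleMealy α β)

def stepConfig (s : Option (M.Q × List β)) (a : α) : Option (M.Q × List β) :=
  s.bind fun qo => (M.step qo.1 a).map fun q' => (q', qo.2 ++ M.out qo.1 a)

theorem run_append (u v : List α) : M.run (u ++ v) = v.foldl M.stepConfig (M.run u) :=
  List.foldl_append ..

theorem run_append_singleton (w : List α) (a : α) :
    M.run (w ++ [a]) = M.stepConfig (M.run w) a :=
  M.run_append w [a]

theorem exists_out_length_le [Finite α] : ∃ K, ∀ q a, (M.out q a).length ≤ K := by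
  have := M.fintypeQ
  obtain ⟨K, hK⟩ := (Set.finite_range fun x : M.Q × α => (M.out x.1 x.2).length).bddAbove
  exact ⟨K, fun q a => hK ⟨(q, a), rfl⟩⟩

theorem length_le_of_run_eq_some {K : ℕ} (hK : ∀ q a, (M.out q a).length ≤ K) {w : List α}
    {p : M.Q} {o : List β} (h : M.run w = some (p, o)) : o.length ≤ w.length * K := by
  induction w using List.reverseRecOn generalizing p o with
  | nil =>
    obtain ⟨-, rfl⟩ := Prod.mk.inj (Option.some.inj h)
    simp
  | append_singleton w a ih =>
    rw [run_append_singleton] at h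
    obtain ⟨⟨q, o'⟩, hw, hstep⟩ := Option.bind_eq_some_iff.mp h
    obtain ⟨p', -, hp⟩ := Option.map_eq_some_iff.mp hstep
    obtain ⟨-, rfl⟩ := Prod.mk.inj hp
    have := ih hw
    have := hK q a
    simp only [List.length_append, List.length_singleton, add_mul, one_mul]
    omega

def configClass (L : Set (List β)) (s : M.Q × List β) : M.Q × Set (List β) :=
  (s.1, (s.2 ++ ·) ⁻¹' L)

variable {M} {L : Set (List β)}

theorem map_configClass_stepConfig {s s' : Option (M.Q × List β)}
    (h : s.map (M.configClass L) = s'.map (M.configClass L)) (a : α) :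
    (M.stepConfig s a).map (M.configClass L) = (M.stepConfig s' a).map (M.configClass L) := by
  rcases s with _ | ⟨p, o⟩ <;> rcases s' with _ | ⟨p', o'⟩
  all_goals simp only [Option.map_none, Option.map_some, reduceCtorEq, Option.some.injEq,
    configClass, Prod.mk.injEq] at h
  · rfl
  · obtain ⟨rfl, ho⟩ := h
    simp only [stepConfig, Option.bind_some, Option.map_map]
    congr 1
    funext q'
    have hsplit (x : List β) :
        (x ++ M.out p a ++ ·) ⁻¹' L = (M.out p a ++ ·) ⁻¹' ((x ++ ·) ⁻¹' L) := by
      ext t; simp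
    simp only [Function.comp_apply, configClass, hsplit, ho]

theorem map_configClass_foldl {s s' : Option (M.Q × List β)}
    (h : s.map (M.configClass L) = s'.map (M.configClass L)) (v : List α) :
    (v.foldl M.stepConfig s).map (M.configClass L) =
      (v.foldl M.stepConfig s').map (M.configClass L) := by
  induction v generalizing s s' with
  | nil => exact h
  | cons a v ih => exact ih (map_configClass_stepConfig h a)

theorem accepts_of_map_configClass_run {w w' : List α}
    (h : (M.run w).map (M.configClass L) = (M.run w').map (M.configClass L))
    (hw : M.Accepts L w) : M.Accepts L w' := by
  obtain ⟨p, o, hrun, hacc⟩ := hw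
  rw [hrun] at h
  obtain ⟨⟨p', o'⟩, hrun', hcls⟩ := Option.map_eq_some_iff.mp h.symm
  simp only [configClass, Prod.mk.injEq] at hcls
  obtain ⟨rfl, ho⟩ := hcls
  refine ⟨p', o', hrun', ?_⟩
  have hmem : ∀ t, o ++ t ∈ L ↔ o' ++ t ∈ L := fun t => (Set.ext_iff.mp ho t).symm
  convert hacc using 3 with i
  exact decide_eq_decide.mpr (hmem _).symm

end OracleMealy

theorem append_two_append_reverse_mem_LR {w : List (Fin 3)} (hw : ∀ d ∈ w, d ≠ 2) :
    w ++ [2] ++ w.reverse ∈ LR :=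
  ⟨w, hw, rfl⟩

theorem eq_of_append_two_append_reverse_mem_LR {w w' : List (Fin 3)} (hw : ∀ d ∈ w, d ≠ 2)
    (hw' : ∀ d ∈ w', d ≠ 2) (h : w' ++ [2] ++ w.reverse ∈ LR) : w' = w := by
  obtain ⟨v, -, he⟩ := h
  simp only [List.append_assoc, List.singleton_append] at he
  obtain ⟨rfl, -, hrev⟩ := (List.append_cons_inj_of_notMem (fun h => hw' 2 h rfl)
    (by simpa using fun h => hw 2 h rfl)).mp he
  exact (List.reverse_injective hrev).symm

def leftQuotientsOfLengthLE {β : Type} (L : Set (List β)) (m : ℕ) : Set (Set (List β)) :=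
  (fun o => (o ++ ·) ⁻¹' L) '' {o | o.length ≤ m}

namespace OracleMealy

variable {β : Type} {M : OracleMealy (Fin 3) β} {L : Set (List β)}

theorem injOn_configClass_run_of_reduces (hM : ∀ u, u ∈ LR ↔ M.Accepts L u) :
    Set.InjOn (fun w => (M.run (w ++ [2])).map (M.configClass L)) {w | ∀ d ∈ w, d ≠ 2} := by
  intro w hw w' hw' h
  have hrun : (M.run (w ++ [2] ++ w.reverse)).map (M.configClass L) =
      (M.run (w' ++ [2] ++ w.reverse)).map (M.configClass L) := by
    rw [M.run_append (w ++ [2]), M.run_append (w' ++ [2])]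
    exact map_configClass_foldl h _
  have hacc :=
    accepts_of_map_configClass_run hrun ((hM _).1 (append_two_append_reverse_mem_LR hw))
  exact (eq_of_append_two_append_reverse_mem_LR hw hw' ((hM _).2 hacc)).symm

theorem two_pow_le_card_mul_encard_of_reduces (hM : ∀ u, u ∈ LR ↔ M.Accepts L u) {K : ℕ}
    (hK : ∀ q a, (M.out q a).length ≤ K) (n : ℕ) :
    (2 ^ n : ℕ∞) ≤ Nat.card M.Q * (leftQuotientsOfLengthLE L ((n + 1) * K)).encard + 1 := by
  have := M.fintypeQ
  set word : (Fin n → Fin 2) → List (Fin 3) := fun x => List.ofFn fun i => (x i).castSucc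
  have hword_inj : Function.Injective word :=
    fun x y h => funext fun i => Fin.castSucc_injective _ (congrFun (List.ofFn_injective h) i)
  have hword_two (x) : ∀ d ∈ word x, d ≠ 2 := by
    simp only [word, List.mem_ofFn, forall_exists_index]
    rintro _ i rfl
    exact Fin.castSucc_ne_last _
  set G := fun x => (M.run (word x ++ [2])).map (M.configClass L)
  have hG : Function.Injective G :=
    fun x y h => hword_inj (injOn_configClass_run_of_reduces hM (hword_two x) (hword_two y) h)
  have hrange : Set.range G ⊆
      insert none (some '' (Set.univ ×ˢ leftQuotientsOfLengthLE L ((n + 1) * K))) := by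
    rintro _ ⟨x, rfl⟩
    rcases h : M.run (word x ++ [2]) with _ | ⟨p, o⟩
    · simp [G, h]
    · have hlen := M.length_le_of_run_eq_some hK h
      simp only [List.length_append, List.length_ofFn, List.length_singleton, word] at hlen
      exact Or.inr ⟨(p, _), ⟨trivial, o, hlen, rfl⟩, by simp only [G, h]; rfl⟩
  calc (2 ^ n : ℕ∞) = ENat.card (Fin n → Fin 2) := by simp
    _ ≤ (Set.range G).encard := hG.encard_range
    _ ≤ _ := Set.encard_le_encard hrange
    _ ≤ (some '' (Set.univ ×ˢ leftQuotientsOfLengthLE L ((n + 1) * K))).encard + 1 :=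
      Set.encard_insert_le _ _
    _ = Nat.card M.Q * (leftQuotientsOfLengthLE L ((n + 1) * K)).encard + 1 := by
      rw [Option.some_injective _ |>.encard_image, Set.encard_prod, Set.encard_univ,
        ENat.card_eq_coe_fintype_card, Nat.card_eq_fintype_card]

end OracleMealy

open Filter in
theorem exists_mul_pow_lt_two_pow (A d : ℕ) : ∃ n, 0 < n ∧ A * n ^ d < 2 ^ n := by
  have hbound := (isLittleO_pow_const_const_pow_of_one_lt (R := ℝ) d one_lt_two).bound
    (c := 1 / (A + 1)) (by positivity)
  obtain ⟨n, hn, hpos⟩ := (hbound.and (eventually_gt_atTop 0)).exists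
  refine ⟨n, hpos, ?_⟩
  have hreal : ((A + 1) * n ^ d : ℝ) ≤ 2 ^ n := by
    rw [Real.norm_of_nonneg (by positivity), Real.norm_of_nonneg (by positivity)] at hn
    rw [div_mul_eq_mul_div, one_mul, le_div_iff₀ (by positivity)] at hn
    linarith
  have hnat : (A + 1) * n ^ d ≤ 2 ^ n := by exact_mod_cast hreal
  have : 0 < n ^ d := pow_pos hpos d
  nlinarith

theorem not_forall_two_pow_le_mul_succ_pow (A d : ℕ) : ¬ ∀ n, 2 ^ n ≤ A * (n + 1) ^ d := by
  intro h
  obtain ⟨N, hN, hlt⟩ := exists_mul_pow_lt_two_pow (2 * A) d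
  have hle := h (N - 1)
  rw [Nat.sub_add_cancel hN] at hle
  have hpow : 2 ^ N = 2 * 2 ^ (N - 1) := by rw [← pow_succ', Nat.sub_add_cancel hN]
  linarith

theorem not_mealyTTReducible_LR_of_encard_leftQuotientsOfLengthLE_le {β : Type}
    {L : Set (List β)} (c d : ℕ)
    (hL : ∀ m, (leftQuotientsOfLengthLE L m).encard ≤ c * (m + 1) ^ d) :
    ¬ MealyTTReducible LR L := by
  rintro ⟨M, hM⟩
  obtain ⟨K, hK⟩ := M.exists_out_length_le
  refine not_forall_two_pow_le_mul_succ_pow (Nat.card M.Q * c * (K + 1) ^ d + 1) d fun n => ?_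
  have hcount : 2 ^ n ≤ Nat.card M.Q * (c * ((n + 1) * K + 1) ^ d) + 1 := by
    have : (2 ^ n : ℕ∞) ≤ Nat.card M.Q * (c * ((n + 1) * K + 1) ^ d) + 1 :=
      (M.two_pow_le_card_mul_encard_of_reduces hM hK n).trans (by gcongr; exact hL _)
    exact_mod_cast this
  have hlen : (n + 1) * K + 1 ≤ (K + 1) * (n + 1) := by nlinarith
  calc 2 ^ n ≤ Nat.card M.Q * (c * ((n + 1) * K + 1) ^ d) + 1 := hcount
    _ ≤ Nat.card M.Q * (c * ((K + 1) * (n + 1)) ^ d) + 1 := by gcongr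
    _ ≤ (Nat.card M.Q * c * (K + 1) ^ d + 1) * (n + 1) ^ d := by
      rw [mul_pow, add_mul, one_mul]
      have : 1 ≤ (n + 1) ^ d := Nat.one_le_pow _ _ n.succ_pos
      nlinarith

theorem exists_eq_replicate_of_append_mem_Lsharp {o t : List Bool} (h : o ++ t ∈ Lsharp) :
    ∃ i j, o = List.replicate i false ++ List.replicate j true := by
  obtain ⟨n, -, he⟩ := h
  have hpre : o <+: List.replicate n false ++ List.replicate n true := he ▸ List.prefix_append o t
  rw [List.prefix_iff_eq_take, List.take_append, List.take_replicate, List.take_replicate,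
    List.length_replicate] at hpre
  exact ⟨_, _, hpre⟩

theorem encard_leftQuotientsOfLengthLE_Lsharp_le (m : ℕ) :
    (leftQuotientsOfLengthLE Lsharp m).encard ≤ 2 * (m + 1) ^ 2 := by
  set S := Finset.range (m + 1) ×ˢ Finset.range (m + 1)
  set f := fun ij : ℕ × ℕ =>
    (List.replicate ij.1 false ++ List.replicate ij.2 true ++ ·) ⁻¹' Lsharp
  have hsub : leftQuotientsOfLengthLE Lsharp m ⊆ insert ∅ (f '' S) := by
    rintro _ ⟨o, ho, rfl⟩
    rcases Set.eq_empty_or_nonempty ((o ++ ·) ⁻¹' Lsharp) with hempty | ⟨t, ht⟩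
    · exact Or.inl hempty
    · obtain ⟨i, j, rfl⟩ := exists_eq_replicate_of_append_mem_Lsharp ht
      replace ho : i + j ≤ m := by simpa using ho
      exact Or.inr ⟨(i, j), by simp [S]; omega, rfl⟩
  calc (leftQuotientsOfLengthLE Lsharp m).encard ≤ (f '' S).encard + 1 :=
        (Set.encard_le_encard hsub).trans (Set.encard_insert_le _ _)
    _ ≤ (S : Set (ℕ × ℕ)).encard + 1 := by gcongr; exact Set.encard_image_le _ _
    _ = (m + 1) ^ 2 + 1 := by rw [Set.encard_coe_eq_coe_finsetCard]; simp [S, sq]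
    _ ≤ 2 * (m + 1) ^ 2 := by
      have : 1 ≤ (m + 1) ^ 2 := Nat.one_le_pow _ _ m.succ_pos
      norm_cast
      omega

/-- `L_R` is not truth-table reducible by a Mealy machine to `L_#`. -/
theorem LR_not_mealyTTReducible_Lsharp : ¬ MealyTTReducible LR Lsharp :=
  not_mealyTTReducible_LR_of_encard_leftQuotientsOfLengthLE_le 2 2
    encard_leftQuotientsOfLengthLE_Lsharp_le
end

section
/- Truth-table reducibility by Mealy machines is closed under intersection of the reduced language with regular languages: for languages L₁ ⊆ Σ* and L₂ ⊆ Δ* over finite nonempty alphabets, if L₁ ≤^A L₂ and R ⊆ Σ* is a regular language, then (L₁ ∩ R) ≤^A L₂. -/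
/-!
Run the Mealy machine and a DFA for `R` in parallel: the product machine has the same oracle
output and queries, and its truth table at a state `(p, t)` is that of `p` conjoined with
acceptance of `t`.
-/

namespace OracleMealy

variable {α β : Type}

theorem run_append_singleton_s6 (M : OracleMealy α β) (w : List α) (a : α) :
    M.run (w ++ [a]) = (M.run w).bind fun qo =>
      (M.step qo.1 a).map fun q' => (q', qo.2 ++ M.out qo.1 a) := by
  simp only [run, List.foldl_append, List.foldl_cons, List.foldl_nil]

open Classical in
noncomputable def prodDFA {T : Type} [Fintype T] (M : OracleMealy α β) (D : DFA α T) :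
    OracleMealy α β where
  Q := M.Q × T
  fintypeQ := letI := M.fintypeQ; inferInstance
  q0 := (M.q0, D.start)
  step q a := (M.step q.1 a).map fun p => (p, D.step q.2 a)
  out q := M.out q.1
  numSuf q := M.numSuf q.1
  suf q := M.suf q.1
  tt q v := M.tt q.1 v && decide (q.2 ∈ D.accept)

variable {T : Type} [Fintype T]

theorem run_prodDFA (M : OracleMealy α β) (D : DFA α T) (w : List α) :
    (M.prodDFA D).run w = (M.run w).map fun po => ((po.1, D.eval w), po.2) := by
  induction w using List.reverseRecOn with
  | nil => rfl
  | append_singleton w a ih =>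
    rw [run_append_singleton_s6, run_append_singleton_s6, ih, DFA.eval_append_singleton]
    cases M.run w with
    | none => rfl
    | some po => cases hstep : M.step po.1 a <;> simp [prodDFA, hstep]

theorem accepts_prodDFA_iff (M : OracleMealy α β) (D : DFA α T) (L : Set (List β))
    (w : List α) : (M.prodDFA D).Accepts L w ↔ M.Accepts L w ∧ w ∈ D.accepts := by
  constructor
  · rintro ⟨⟨p, t⟩, o, hprod, htt⟩
    obtain ⟨⟨p, o⟩, hrun, heq⟩ :=
      Option.map_eq_some_iff.1 ((run_prodDFA M D w).symm.trans hprod)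
    obtain ⟨⟨rfl, rfl⟩, rfl⟩ := Prod.mk.inj heq
    simp only [prodDFA, Bool.and_eq_true, decide_eq_true_eq] at htt
    exact ⟨⟨p, o, hrun, htt.1⟩, htt.2⟩
  · rintro ⟨⟨p, o, hrun, htt⟩, hacc⟩
    refine ⟨(p, D.eval w), o, by rw [run_prodDFA, hrun]; rfl, ?_⟩
    simp only [prodDFA, Bool.and_eq_true, decide_eq_true_eq]
    exact ⟨htt, hacc⟩

end OracleMealy

theorem mealyTTReducible_inter_regular_general
    {σ Δ : Type}
    (L₁ : Set (List σ)) (L₂ : Set (List Δ)) (R : Set (List σ))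
    (h : MealyTTReducible L₁ L₂) (hR : Language.IsRegular (R : Language σ)) :
    MealyTTReducible (L₁ ∩ R) L₂ := by
  obtain ⟨M, hM⟩ := h
  obtain ⟨T, _, D, hD⟩ := hR
  refine ⟨M.prodDFA D, fun w => ?_⟩
  rw [OracleMealy.accepts_prodDFA_iff, ← hM, hD]
  rfl

/-- Truth-table reducibility by Mealy machines is closed under intersection of the reduced
language with a regular language. -/
theorem mealyTTReducible_inter_regular
    {σ Δ : Type} [Fintype σ] [Nonempty σ] [Fintype Δ] [Nonempty Δ]
    (L₁ : Set (List σ)) (L₂ : Set (List Δ)) (R : Set (List σ))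
    (h : MealyTTReducible L₁ L₂) (hR : Language.IsRegular (R : Language σ)) :
    MealyTTReducible (L₁ ∩ R) L₂ :=
  mealyTTReducible_inter_regular_general L₁ L₂ R h hR
end

section
/- Let L ⊆ Δ* be a language over a finite nonempty alphabet Δ. Suppose there exist words v ∈ Δ* and nonempty words x, w, y, z ∈ Δ⁺, and a language L' that is either L or its complement Δ* ∖ L, such that for all m ≥ 0 and n > 0: (v·xᵐ·w·yⁿ⁻¹·z ∉ L' and v·xᵐ·w·yⁿ·z ∈ L') if and only if m = n. Then L_# = {0ⁿ1ⁿ | n ≥ 1} is truth-table reducible by a Mealy machine to L, i.e., L_# ≤^A L. -/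
/-- `wpow x n` is the `n`-fold concatenation `xⁿ` of the word `x`. -/
def wpow {α : Type} (x : List α) (n : ℕ) : List α := (List.replicate n x).flatten

/-!
A Mealy machine reads `0^m 1^n` with `m, n ≥ 1` and writes `v xᵐ w yⁿ⁻¹` on the oracle tape:
`v x` on the first `0`, `x` on every further `0`, `w` on the first `1` and `y` on every further
`1`; any other input pattern has no run. In its final state it asks the oracle about the suffixes
`z` and `y z`, and its truth table evaluates `v xᵐ w yⁿ⁻¹ z ∉ L' ∧ v xᵐ w yⁿ z ∈ L'` from the
two answers, complemented when `L' = Lᶜ`. By hypothesis this holds exactly when `m = n`.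
-/

theorem wpow_succ {α : Type} (x : List α) (n : ℕ) : wpow x (n + 1) = x ++ wpow x n := by
  simp [wpow, List.replicate_succ]

theorem wpow_succ' {α : Type} (x : List α) (n : ℕ) : wpow x (n + 1) = wpow x n ++ x := by
  simp [wpow, List.replicate_succ']

namespace OracleMealy

variable {α β : Type} (M : OracleMealy α β)

def runFrom (q : M.Q) (o : List β) (u : List α) : Option (M.Q × List β) :=
  u.foldl
    (fun s a => s.bind fun qo => (M.step qo.1 a).map fun q' => (q', qo.2 ++ M.out qo.1 a))
    (some (q, o))

theorem run_eq_runFrom (u : List α) : M.run u = M.runFrom M.q0 [] u := rfl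

@[simp]
theorem runFrom_nil (q : M.Q) (o : List β) : M.runFrom q o [] = some (q, o) := rfl

theorem runFrom_cons (q : M.Q) (o : List β) (a : α) (u : List α) :
    M.runFrom q o (a :: u) = (M.step q a).bind fun q' => M.runFrom q' (o ++ M.out q a) u := by
  cases hq : M.step q a with
  | none =>
    simp only [runFrom, List.foldl_cons, Option.bind_some, hq, Option.map_none, Option.bind_none]
    exact List.foldl_fixed' (fun _ => rfl) u
  | some q' => simp [runFrom, hq]

theorem runFrom_append (q : M.Q) (o : List β) (u u' : List α) :
    M.runFrom q o (u ++ u') = (M.runFrom q o u).bind fun qo => M.runFrom qo.1 qo.2 u' := by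
  induction u generalizing q o with
  | nil => rfl
  | cons a u ih => cases hq : M.step q a <;> simp [runFrom_cons, hq, ih]

theorem runFrom_replicate_of_step_eq_self {q : M.Q} {a : α} (hq : M.step q a = some q)
    (o : List β) (n : ℕ) :
    M.runFrom q o (List.replicate n a) = some (q, o ++ wpow (M.out q a) n) := by
  induction n generalizing o with
  | zero => simp [wpow]
  | succ n ih => simp [List.replicate_succ, runFrom_cons, hq, ih, wpow_succ]

end OracleMealy

inductive BlockState | start | zeros | ones
  deriving DecidableEq

namespace BlockState

instance : Fintype BlockState := ⟨{start, zeros, ones}, fun q => by cases q <;> simp⟩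

variable {Δ : Type} (v x w y z : List Δ) (negated : Bool)

/-- `negated` tells whether the oracle answers are to be complemented, i.e. whether `L' = Lᶜ`.
Reducible, so that `rw` and `simp` see `(machine …).Q` as `BlockState`. -/
@[reducible]
def machine : OracleMealy Bool Δ where
  Q := BlockState
  q0 := start
  step
    | start, false => some zeros
    | zeros, false => some zeros
    | zeros, true => some ones
    | ones, true => some ones
    | _, _ => none
  out
    | start, false => v ++ x
    | zeros, false => x
    | zeros, true => w
    | ones, true => y
    | _, _ => []
  numSuf
    | ones => 2
    | _ => 0
  suf
    | start => ![]
    | zeros => ![]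
    | ones => ![z, y ++ z]
  tt
    | ones => fun b => !(b 0 ^^ negated) && (b 1 ^^ negated)
    | _ => fun _ => false

variable {v x w y z negated}

theorem machine_runFrom_ones_eq_some {u : List Bool} {o o' : List Δ} {p : BlockState}
    (h : (machine v x w y z negated).runFrom ones o u = some (p, o')) :
    ∃ n, u = List.replicate n true ∧ o' = o ++ wpow y n := by
  induction u generalizing o with
  | nil => cases h; exact ⟨0, rfl, by simp [wpow]⟩
  | cons a u ih =>
    cases a <;> simp only [OracleMealy.runFrom_cons, machine, Option.bind_none, Option.bind_some,
      reduceCtorEq] at h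
    obtain ⟨n, rfl, rfl⟩ := ih h
    exact ⟨n + 1, rfl, by simp [wpow_succ]⟩

theorem machine_runFrom_zeros_eq_some_ones {u : List Bool} {o o' : List Δ}
    (h : (machine v x w y z negated).runFrom zeros o u = some (ones, o')) :
    ∃ k n, u = List.replicate k false ++ true :: List.replicate n true ∧
      o' = o ++ wpow x k ++ w ++ wpow y n := by
  induction u generalizing o with
  | nil => cases h
  | cons a u ih =>
    cases a <;> simp only [OracleMealy.runFrom_cons, machine, Option.bind_some] at h
    · obtain ⟨k, n, rfl, rfl⟩ := ih h
      exact ⟨k + 1, n, rfl, by simp [wpow_succ]⟩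
    · obtain ⟨n, rfl, rfl⟩ := machine_runFrom_ones_eq_some h
      exact ⟨0, n, rfl, by simp [wpow]⟩

theorem machine_run_eq_some_ones_iff {b : List Bool} {o : List Δ} :
    (machine v x w y z negated).run b = some (ones, o) ↔
      ∃ m n, b = List.replicate (m + 1) false ++ List.replicate (n + 1) true ∧
        o = v ++ wpow x (m + 1) ++ w ++ wpow y n := by
  rw [OracleMealy.run_eq_runFrom]
  constructor
  · intro h
    rcases b with _ | ⟨_ | _, b⟩ <;>
      simp only [OracleMealy.runFrom_nil, OracleMealy.runFrom_cons, machine, Option.bind_some,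
        Option.bind_none, Option.some.injEq, Prod.mk.injEq, reduceCtorEq, false_and] at h
    obtain ⟨m, n, rfl, rfl⟩ := machine_runFrom_zeros_eq_some_ones h
    exact ⟨m, n, rfl, by simp [wpow_succ]⟩
  · rintro ⟨m, n, rfl, rfl⟩
    calc (machine v x w y z negated).runFrom start []
          (List.replicate (m + 1) false ++ List.replicate (n + 1) true)
        = (machine v x w y z negated).runFrom zeros (v ++ x)
            (List.replicate m false ++ true :: List.replicate n true) := rfl
      _ = (machine v x w y z negated).runFrom zeros (v ++ x ++ wpow x m)
            (true :: List.replicate n true) := by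
        rw [OracleMealy.runFrom_append, OracleMealy.runFrom_replicate_of_step_eq_self _ rfl]
        rfl
      _ = (machine v x w y z negated).runFrom ones (v ++ x ++ wpow x m ++ w)
            (List.replicate n true) := rfl
      _ = some (ones, v ++ wpow x (m + 1) ++ w ++ wpow y n) := by
        rw [OracleMealy.runFrom_replicate_of_step_eq_self _ rfl]
        simp [machine, wpow_succ]

open Classical in
theorem machine_tt_eq_true_iff {L : Set (List Δ)} {p : BlockState} {o : List Δ} :
    (machine v x w y z negated).tt p
        (fun i => decide (o ++ (machine v x w y z negated).suf p i ∈ L)) = true ↔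
      p = ones ∧ o ++ z ∉ (if negated then Lᶜ else L) ∧
        o ++ (y ++ z) ∈ (if negated then Lᶜ else L) := by
  cases p
  case ones =>
    by_cases hz : o ++ z ∈ L <;> by_cases hyz : o ++ (y ++ z) ∈ L <;> cases negated <;>
      simp [hz, hyz]
  all_goals simp

theorem machine_accepts_iff {L : Set (List Δ)} {b : List Bool} :
    (machine v x w y z negated).Accepts L b ↔
      ∃ m n, b = List.replicate (m + 1) false ++ List.replicate (n + 1) true ∧
        v ++ wpow x (m + 1) ++ w ++ wpow y n ++ z ∉ (if negated then Lᶜ else L) ∧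
        v ++ wpow x (m + 1) ++ w ++ wpow y (n + 1) ++ z ∈ (if negated then Lᶜ else L) := by
  constructor
  · rintro ⟨p, o, hrun, htt⟩
    obtain ⟨rfl, hz, hyz⟩ := machine_tt_eq_true_iff.1 htt
    obtain ⟨m, n, rfl, rfl⟩ := machine_run_eq_some_ones_iff.1 hrun
    exact ⟨m, n, rfl, by simpa using hz, by simpa [wpow_succ'] using hyz⟩
  · rintro ⟨m, n, rfl, hz, hyz⟩
    exact ⟨ones, _, machine_run_eq_some_ones_iff.2 ⟨m, n, rfl, rfl⟩,
      machine_tt_eq_true_iff.2 ⟨rfl, by simpa using hz, by simpa [wpow_succ'] using hyz⟩⟩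

end BlockState

theorem Lsharp_mealyTTReducible_of_witness_general
    {Δ : Type} (L : Set (List Δ))
    (v x w y z : List Δ)
    (L' : Set (List Δ)) (hL' : L' = L ∨ L' = Lᶜ)
    (h : ∀ m n : ℕ, 1 ≤ n →
      ((v ++ wpow x m ++ w ++ wpow y (n - 1) ++ z ∉ L' ∧
        v ++ wpow x m ++ w ++ wpow y n ++ z ∈ L') ↔ m = n)) :
    MealyTTReducible Lsharp L := by
  obtain ⟨negated, rfl⟩ : ∃ negated : Bool, L' = if negated then Lᶜ else L := by
    rcases hL' with rfl | rfl
    exacts [⟨false, rfl⟩, ⟨true, rfl⟩]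
  refine ⟨BlockState.machine v x w y z negated, fun b => ?_⟩
  rw [BlockState.machine_accepts_iff]
  constructor
  · rintro ⟨_ | n, hn, rfl⟩
    · cases hn
    · exact ⟨n, n, rfl, (h (n + 1) (n + 1) le_add_self).2 rfl⟩
  · rintro ⟨m, n, rfl, hmn⟩
    obtain rfl : m = n := by simpa using (h (m + 1) (n + 1) le_add_self).1 hmn
    exact ⟨m + 1, le_add_self, rfl⟩

/-- If there are words `v` and nonempty words `x, w, y, z` over `Δ` and a language
`L' ∈ {L, Lᶜ}` such that for all `m ≥ 0` and `n > 0`,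
`(v xᵐ w yⁿ⁻¹ z ∉ L' and v xᵐ w yⁿ z ∈ L') ↔ m = n`, then `L_# ≤^A L`. -/
theorem Lsharp_mealyTTReducible_of_witness
    {Δ : Type} [Fintype Δ] [Nonempty Δ] (L : Set (List Δ))
    (v x w y z : List Δ) (hx : x ≠ []) (hw : w ≠ []) (hy : y ≠ []) (hz : z ≠ [])
    (L' : Set (List Δ)) (hL' : L' = L ∨ L' = Lᶜ)
    (h : ∀ m n : ℕ, 1 ≤ n →
      ((v ++ wpow x m ++ w ++ wpow y (n - 1) ++ z ∉ L' ∧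
        v ++ wpow x m ++ w ++ wpow y n ++ z ∈ L') ↔ m = n)) :
    MealyTTReducible Lsharp L :=
  Lsharp_mealyTTReducible_of_witness_general L v x w y z L' hL' h
end

section
/- The concatenation L_#·L_# = {0ᵐ1ᵐ0ⁿ1ⁿ | m, n ≥ 1} of the language L_# = {0ⁿ1ⁿ | n ≥ 1} with itself is NOT truth-table reducible by a Mealy machine to L_#; that is, ¬((L_#·L_#) ≤^A L_#). -/
/-- The concatenation `L_# · L_# = {0ᵐ1ᵐ0ⁿ1ⁿ | m, n ≥ 1}`. -/
def LsharpSq : Set (List Bool) :=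
  {w | ∃ u ∈ Lsharp, ∃ v ∈ Lsharp, w = u ++ v}



namespace MealyAux

open List

/-- `lpow x n` is `x` concatenated with itself `n` times. -/
def lpow {γ : Type} (x : List γ) : ℕ → List γ
  | 0 => []
  | n+1 => x ++ lpow x n

@[simp] lemma lpow_zero {γ : Type} (x : List γ) : lpow x 0 = [] := rfl
@[simp] lemma lpow_succ {γ : Type} (x : List γ) (n : ℕ) : lpow x (n+1) = x ++ lpow x n := rfl

lemma lpow_one {γ : Type} (x : List γ) : lpow x 1 = x := append_nil x

lemma lpow_add_two {γ : Type} (x : List γ) (n : ℕ) :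
    lpow x (n+2) = x ++ (x ++ lpow x n) := rfl

lemma lpow_add {γ : Type} (x : List γ) (m n : ℕ) :
    lpow x (m + n) = lpow x m ++ lpow x n := by
  induction m with
  | zero => simp
  | succ m ih => rw [show m + 1 + n = (m + n) + 1 by omega, lpow_succ, lpow_succ, ih,
      append_assoc]

lemma lpow_mul {γ : Type} (x : List γ) (m n : ℕ) :
    lpow x (m * n) = lpow (lpow x n) m := by
  induction m with
  | zero => simp
  | succ m ih => rw [show (m+1)*n = n + m*n by ring, lpow_add, ih, lpow_succ]

lemma count_lpow (c : Bool) (x : List Bool) (n : ℕ) :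
    count c (lpow x n) = n * count c x := by
  induction n with
  | zero => simp
  | succ n ih => simp [count_append, ih]; ring

lemma mem_lpow_of_mem {c : Bool} {x : List Bool} (h : c ∈ x) (n : ℕ) :
    c ∈ lpow x (n+1) := by
  simp [lpow_succ]; exact Or.inl h

lemma lpow_replicate {γ : Type} (c : γ) (ρ j : ℕ) :
    lpow (replicate ρ c) j = replicate (j * ρ) c := by
  induction j with
  | zero => simp
  | succ j ih => rw [lpow_succ, ih, show (j+1)*ρ = ρ + j*ρ by ring, replicate_add]

/-- Strings of the form `0^a 1^b`. -/
def isZO (w : List Bool) : Prop :=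
  ∃ a b, w = replicate a false ++ replicate b true

lemma Lsharp_isZO {w : List Bool} (h : w ∈ Lsharp) : isZO w := by
  obtain ⟨n, _, rfl⟩ := h; exact ⟨n, n, rfl⟩

lemma Lsharp_count {w : List Bool} (h : w ∈ Lsharp) : count false w = count true w := by
  obtain ⟨n, _, rfl⟩ := h
  simp [count_append, count_replicate]

lemma allT_right {u v : List Bool} (h : isZO (u ++ v)) (hu : true ∈ u) :
    ∀ c ∈ v, c = true := by
  obtain ⟨a, b, hab⟩ := h
  rcases List.append_eq_append_iff.mp hab with ⟨l, h1, h2⟩ | ⟨l, h1, h2⟩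
  · have : true ∈ replicate a false := h1 ▸ mem_append_left l hu
    exact absurd (eq_of_mem_replicate this) (by simp)
  · intro c hc
    exact eq_of_mem_replicate (h2 ▸ mem_append_right l hc)

lemma sq_cases {c₀ x c₁ : List Bool} (h : isZO (c₀ ++ (x ++ (x ++ c₁)))) (hx : x ≠ []) :
    (∀ c ∈ x, c = false) ∨ (∀ c ∈ x, c = true) := by
  by_cases htrue : true ∈ x
  · right
    have h' : isZO ((c₀ ++ x) ++ (x ++ c₁)) := by simpa [append_assoc] using h
    have := allT_right h' (mem_append_right c₀ htrue)
    exact fun c hc => this c (mem_append_left c₁ hc)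
  · left
    intro c hc
    cases c
    · rfl
    · exact absurd hc htrue

end MealyAux

namespace MealyAux
open List

lemma rep_cons_inj {e d : Bool} (hcd : d ≠ e) :
    ∀ (a a' : ℕ) (r r' : List Bool),
      replicate a e ++ d :: r = replicate a' e ++ d :: r' → a = a' ∧ r = r' := by
  intro a
  induction a with
  | zero =>
    intro a' r r' h
    cases a' with
    | zero => simpa using h
    | succ a' =>
      rw [replicate_succ] at h
      simp only [replicate_zero, nil_append, cons_append, cons.injEq] at h
      exact absurd h.1 hcd
  | succ a ih =>
    intro a' r r' h
    cases a' with
    | zero =>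
      rw [replicate_succ] at h
      simp only [replicate_zero, nil_append, cons_append, cons.injEq] at h
      exact absurd h.1.symm hcd
    | succ a' =>
      rw [replicate_succ, replicate_succ] at h
      simp only [cons_append, cons.injEq, true_and] at h
      obtain ⟨h1, h2⟩ := ih a' r r' h
      exact ⟨by omega, h2⟩

lemma blocks_inj {m k n l a b c d : ℕ}
    (hk : 1 ≤ k) (hn : 1 ≤ n) (hl : 1 ≤ l) (hb : 1 ≤ b) (hc : 1 ≤ c) (hd : 1 ≤ d)
    (h : replicate m false ++ (replicate k true ++ (replicate n false ++ replicate l true))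
       = replicate a false ++ (replicate b true ++ (replicate c false ++ replicate d true))) :
    m = a ∧ k = b ∧ n = c ∧ l = d := by
  obtain ⟨k1, rfl⟩ : ∃ k1, k = k1 + 1 := ⟨k - 1, by omega⟩
  obtain ⟨b1, rfl⟩ : ∃ b1, b = b1 + 1 := ⟨b - 1, by omega⟩
  obtain ⟨n1, rfl⟩ : ∃ n1, n = n1 + 1 := ⟨n - 1, by omega⟩
  obtain ⟨c1, rfl⟩ : ∃ c1, c = c1 + 1 := ⟨c - 1, by omega⟩
  obtain ⟨l1, rfl⟩ : ∃ l1, l = l1 + 1 := ⟨l - 1, by omega⟩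
  obtain ⟨d1, rfl⟩ : ∃ d1, d = d1 + 1 := ⟨d - 1, by omega⟩
  simp only [replicate_succ, cons_append] at h
  obtain ⟨e1, h⟩ := rep_cons_inj (by simp) _ _ _ _ h
  obtain ⟨e2, h⟩ := rep_cons_inj (by simp) _ _ _ _ h
  obtain ⟨e3, h⟩ := rep_cons_inj (by simp) _ _ _ _ h
  have e4 : l1 = d1 := by simpa using congrArg length h
  omega

lemma mem_LsharpSq {m n : ℕ} (hm : 1 ≤ m) (hn : 1 ≤ n) :
    (replicate m false ++ (replicate m true ++ (replicate n false ++ replicate n true)))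
      ∈ LsharpSq :=
  ⟨_, ⟨m, hm, rfl⟩, _, ⟨n, hn, rfl⟩, by simp [append_assoc]⟩

lemma notMem_LsharpSq {m k n l : ℕ}
    (hm : 1 ≤ m) (hk : 1 ≤ k) (hn : 1 ≤ n) (hl : 1 ≤ l) (hne : m ≠ k ∨ n ≠ l) :
    (replicate m false ++ (replicate k true ++ (replicate n false ++ replicate l true)))
      ∉ LsharpSq := by
  rintro ⟨u, ⟨a, ha, rfl⟩, v, ⟨c, hc, rfl⟩, hw⟩
  rw [show replicate a false ++ replicate a true ++ (replicate c false ++ replicate c true)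
      = replicate a false ++ (replicate a true ++ (replicate c false ++ replicate c true)) from by
        simp [append_assoc]] at hw
  obtain ⟨e1, e2, e3, e4⟩ := blocks_inj hk hn hl ha hc hc hw
  omega

lemma slope {C D xf xt t1 t2 : ℕ} (h12 : t1 < t2)
    (e1 : C + t1 * xf = D + t1 * xt) (e2 : C + t2 * xf = D + t2 * xt) : xf = xt := by
  have e1' : (C : ℤ) + t1 * xf = D + t1 * xt := by exact_mod_cast e1
  have e2' : (C : ℤ) + t2 * xf = D + t2 * xt := by exact_mod_cast e2
  have h : ((t2 : ℤ) - t1) * xf = ((t2 : ℤ) - t1) * xt := by ring_nf; linarith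
  have ht : ((t2 : ℤ) - t1) ≠ 0 := by
    have : (t1 : ℤ) < t2 := by exact_mod_cast h12
    linarith
  have := mul_left_cancel₀ ht h
  exact_mod_cast this

lemma count_false_of_allT {x : List Bool} (h : ∀ c ∈ x, c = true) : count false x = 0 :=
  count_eq_zero.mpr (fun hm => by simpa using h false hm)

lemma count_true_of_allT {x : List Bool} (h : ∀ c ∈ x, c = true) :
    count true x = x.length :=
  count_eq_length.mpr (fun b hb => (h b hb).symm)

lemma count_true_of_allF {x : List Bool} (h : ∀ c ∈ x, c = false) : count true x = 0 :=
  count_eq_zero.mpr (fun hm => by simpa using h true hm)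

lemma count_false_of_allF {x : List Bool} (h : ∀ c ∈ x, c = false) :
    count false x = x.length :=
  count_eq_length.mpr (fun b hb => (h b hb).symm)

end MealyAux

namespace MealyAux
open List

/-- A single pumped segment can make the oracle query true for at most one exponent `≥ 2`. -/
lemma pump_unique {c₀ x c₁ : List Bool} (hx : x ≠ []) {t1 t2 : ℕ}
    (h1 : 2 ≤ t1) (h12 : t1 < t2)
    (m1 : c₀ ++ (lpow x t1 ++ c₁) ∈ Lsharp)
    (m2 : c₀ ++ (lpow x t2 ++ c₁) ∈ Lsharp) : False := by
  have e1 := Lsharp_count m1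
  have e2 := Lsharp_count m2
  simp only [count_append, count_lpow] at e1 e2
  have hxx : count false x = count true x :=
    slope (C := count false c₀ + count false c₁) (D := count true c₀ + count true c₁)
      h12 (by linarith) (by linarith)
  obtain ⟨t', rfl⟩ : ∃ t', t2 = t' + 2 := ⟨t2 - 2, by omega⟩
  have hz : isZO (c₀ ++ (x ++ (x ++ (lpow x t' ++ c₁)))) := by
    have := Lsharp_isZO m2
    rw [lpow_add_two] at this
    simpa [append_assoc] using this
  have hlen : x.length ≠ 0 := by simpa using hx
  rcases sq_cases hz hx with hF | hT
  · rw [count_false_of_allF hF, count_true_of_allF hF] at hxx; omega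
  · rw [count_false_of_allT hT, count_true_of_allT hT] at hxx; omega

/-- Counting: two diagonal memberships with two pumped segments force the slope identity. -/
lemma pump2_slope {c₀ x c₁ y c₂ : List Bool} {t1 t2 : ℕ} (h12 : t1 < t2)
    (m1 : c₀ ++ (lpow x t1 ++ (c₁ ++ (lpow y t1 ++ c₂))) ∈ Lsharp)
    (m2 : c₀ ++ (lpow x t2 ++ (c₁ ++ (lpow y t2 ++ c₂))) ∈ Lsharp) :
    count false x + count false y = count true x + count true y := by
  have e1 := Lsharp_count m1
  have e2 := Lsharp_count m2
  simp only [count_append, count_lpow] at e1 e2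
  exact slope (C := count false c₀ + count false c₁ + count false c₂)
      (D := count true c₀ + count true c₁ + count true c₂)
      (xf := count false x + count false y) (xt := count true x + count true y)
      h12 (by linarith) (by linarith)

/-- Structure of a doubly pumped word that hits `L_#` at two exponents `≥ 2`. -/
lemma pump2_structure {c₀ x c₁ y c₂ : List Bool} (hx : x ≠ []) (hy : y ≠ []) {t1 t2 : ℕ}
    (h1 : 2 ≤ t1) (h12 : t1 < t2)
    (m1 : c₀ ++ (lpow x t1 ++ (c₁ ++ (lpow y t1 ++ c₂))) ∈ Lsharp)
    (m2 : c₀ ++ (lpow x t2 ++ (c₁ ++ (lpow y t2 ++ c₂))) ∈ Lsharp) :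
    ∀ c ∈ c₂, c = true := by
  have hsl := pump2_slope h12 m1 m2
  obtain ⟨t', rfl⟩ : ∃ t', t2 = t' + 2 := ⟨t2 - 2, by omega⟩
  have hZ := Lsharp_isZO m2
  have hxlen : x.length ≠ 0 := by simpa using hx
  have hylen : y.length ≠ 0 := by simpa using hy
  -- dichotomy for x
  have hxc : (∀ c ∈ x, c = false) ∨ (∀ c ∈ x, c = true) := by
    apply sq_cases (c₀ := c₀) (c₁ := lpow x t' ++ (c₁ ++ (lpow y (t'+2) ++ c₂))) _ hx
    rw [lpow_add_two x] at hZ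
    simpa [append_assoc] using hZ
  -- dichotomy for y
  have hyc : (∀ c ∈ y, c = false) ∨ (∀ c ∈ y, c = true) := by
    apply sq_cases (c₀ := c₀ ++ (lpow x (t'+2) ++ c₁)) (c₁ := lpow y t' ++ c₂) _ hy
    rw [lpow_add_two y] at hZ
    simpa [append_assoc] using hZ
  rcases hxc with hxF | hxT
  · -- x is all zeros; y must be all ones
    have hyT : ∀ c ∈ y, c = true := by
      rcases hyc with hyF | hyT
      · rw [count_false_of_allF hxF, count_true_of_allF hxF,
            count_false_of_allF hyF, count_true_of_allF hyF] at hsl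
        omega
      · exact hyT
    -- true occurs in y, hence everything after the first copy of y is true
    obtain ⟨cy, hcy⟩ := exists_mem_of_ne_nil y hy
    have hty : true ∈ y := (hyT cy hcy) ▸ hcy
    have hsplit : isZO ((c₀ ++ (lpow x (t'+2) ++ (c₁ ++ y))) ++ (lpow y (t'+1) ++ c₂)) := by
      rw [show lpow y (t'+2) = y ++ lpow y (t'+1) from rfl] at hZ
      simpa [append_assoc] using hZ
    have hall := allT_right hsplit (by
      exact mem_append_right _ (mem_append_right _ (mem_append_right _ hty)))
    exact fun c hc => hall c (mem_append_right _ hc)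
  · -- x all ones: then y is all true as well, contradiction with slope
    obtain ⟨cx, hcx⟩ := exists_mem_of_ne_nil x hx
    have htx : true ∈ x := (hxT cx hcx) ▸ hcx
    have hsplit : isZO ((c₀ ++ x) ++ (lpow x (t'+1) ++ (c₁ ++ (lpow y (t'+2) ++ c₂)))) := by
      rw [show lpow x (t'+2) = x ++ lpow x (t'+1) from rfl] at hZ
      simpa [append_assoc] using hZ
    have hall := allT_right hsplit (mem_append_right _ htx)
    have hyT : ∀ c ∈ y, c = true := fun c hc => hall c
      (mem_append_right _ (mem_append_right _ (mem_append_left _ (mem_lpow_of_mem hc (t'+1)))))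
    rw [count_false_of_allT hxT, count_true_of_allT hxT,
        count_false_of_allT hyT, count_true_of_allT hyT] at hsl
    omega

end MealyAux

namespace MealyAux
open List

variable {α β : Type}

def stepF (M : OracleMealy α β) : Option (M.Q × List β) → α → Option (M.Q × List β) :=
  fun s a => s.bind fun qo => (M.step qo.1 a).map fun q' => (q', qo.2 ++ M.out qo.1 a)

def runF (M : OracleMealy α β) (q : M.Q) (w : List α) : Option (M.Q × List β) :=
  w.foldl (stepF M) (some (q, []))

lemma run_eq_runF (M : OracleMealy α β) (w : List α) : M.run w = runF M M.q0 w := rfl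

lemma foldl_stepF_none (M : OracleMealy α β) : ∀ w : List α, w.foldl (stepF M) none = none := by
  intro w
  induction w with
  | nil => rfl
  | cons a w ih => simpa [stepF] using ih

lemma foldl_stepF_some (M : OracleMealy α β) :
    ∀ (w : List α) (q : M.Q) (o : List β),
      w.foldl (stepF M) (some (q, o)) = (runF M q w).map fun p => (p.1, o ++ p.2) := by
  intro w
  induction w with
  | nil => intro q o; simp [runF]
  | cons a w ih =>
    intro q o
    rw [foldl_cons]
    rw [show runF M q (a :: w) = w.foldl (stepF M) (stepF M (some (q, [])) a) from rfl]
    cases hs : M.step q a with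
    | none =>
      have h1 : stepF M (some (q, o)) a = none := by simp [stepF, hs]
      have h2 : stepF M (some (q, ([] : List β))) a = none := by simp [stepF, hs]
      rw [h1, h2, foldl_stepF_none]
      rfl
    | some q' =>
      have h1 : stepF M (some (q, o)) a = some (q', o ++ M.out q a) := by simp [stepF, hs]
      have h2 : stepF M (some (q, ([] : List β))) a = some (q', M.out q a) := by
        simp [stepF, hs]
      rw [h1, h2, ih, ih]
      cases runF M q' w with
      | none => rfl
      | some p => simp

lemma runF_append (M : OracleMealy α β) (q : M.Q) (u v : List α) :
    runF M q (u ++ v)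
      = (runF M q u).bind fun p => (runF M p.1 v).map fun p' => (p'.1, p.2 ++ p'.2) := by
  rw [runF, foldl_append]
  rw [show u.foldl (stepF M) (some (q, [])) = runF M q u from rfl]
  cases h : runF M q u with
  | none => exact foldl_stepF_none M v
  | some p =>
    rw [show (some p : Option (M.Q × List β)) = some (p.1, p.2) from rfl]
    rw [foldl_stepF_some]
    rfl

lemma runF_append_some {M : OracleMealy α β} {q q1 q2 : M.Q} {u v : List α}
    {o1 o2 : List β}
    (h1 : runF M q u = some (q1, o1)) (h2 : runF M q1 v = some (q2, o2)) :
    runF M q (u ++ v) = some (q2, o1 ++ o2) := by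
  rw [runF_append, h1]
  simp [h2]

lemma isSome_left_of_append {M : OracleMealy α β} {q : M.Q} {u v : List α}
    (h : (runF M q (u ++ v)).isSome) : (runF M q u).isSome := by
  rw [runF_append] at h
  cases hu : runF M q u with
  | none => rw [hu] at h; simp at h
  | some p => rfl

lemma isSome_right_of_append {M : OracleMealy α β} {q q1 : M.Q} {u v : List α} {o : List β}
    (h : (runF M q (u ++ v)).isSome) (h1 : runF M q u = some (q1, o)) :
    (runF M q1 v).isSome := by
  rw [runF_append, h1] at h
  cases hv : runF M q1 v with
  | none => simp [hv] at h
  | some p => rfl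

lemma runF_append_parts {M : OracleMealy α β} {q p2 : M.Q} {u v : List α} {o : List β}
    (h : runF M q (u ++ v) = some (p2, o)) :
    ∃ q1 o1 o2, runF M q u = some (q1, o1) ∧ runF M q1 v = some (p2, o2) ∧ o = o1 ++ o2 := by
  rw [runF_append] at h
  cases hu : runF M q u with
  | none => rw [hu] at h; simp at h
  | some p =>
    obtain ⟨p1, o1⟩ := p
    rw [hu] at h
    cases hv : runF M p1 v with
    | none => simp [hv] at h
    | some p' =>
      obtain ⟨a1, a2⟩ := p'
      simp only [hv, Option.bind_some, Option.map_some, Option.some.injEq, Prod.mk.injEq] at h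
      exact ⟨p1, o1, a2, rfl, by rw [hv, h.1], h.2.symm⟩

lemma runF_lpow {M : OracleMealy α β} {q : M.Q} {w : List α} {z : List β}
    (h : runF M q w = some (q, z)) : ∀ j, runF M q (lpow w j) = some (q, lpow z j) := by
  intro j
  induction j with
  | zero => rfl
  | succ j ih => rw [lpow_succ, lpow_succ]; exact runF_append_some h ih

end MealyAux

namespace MealyAux
open List

lemma exists_lt_map_eq {γ : Type} [Fintype γ] (f : ℕ → γ) (N : ℕ)
    (h : Fintype.card γ ≤ N) (base : ℕ) :
    ∃ i j, base ≤ i ∧ i < j ∧ f i = f j := by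
  obtain ⟨a, b, hab, hf⟩ := Fintype.exists_ne_map_eq_of_card_lt
    (fun k : Fin (N+1) => f (base + k)) (by simpa using Nat.lt_succ_of_le h)
  have hab' : (a : ℕ) ≠ (b : ℕ) := fun hc => hab (Fin.ext hc)
  rcases Nat.lt_or_ge (a : ℕ) (b : ℕ) with h' | h'
  · exact ⟨base + a, base + b, Nat.le_add_right _ _, by omega, hf⟩
  · exact ⟨base + b, base + a, Nat.le_add_right _ _, by omega, hf.symm⟩

/-- Pumping a single homogeneous block: an arithmetic progression of lengths along which the
machine returns to the same state, with periodic output. -/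
lemma pump_block (M : OracleMealy Bool Bool) (q : M.Q) (c : Bool)
    (H : ∀ i, (runF M q (replicate i c)).isSome) :
    ∃ b ρ q1 o0 z0, 1 ≤ ρ ∧
      (∀ j : ℕ, runF M q (replicate (b + j * ρ) c) = some (q1, o0 ++ lpow z0 j)) := by
  letI := M.fintypeQ
  have st : ∀ i, ∃ p, runF M q (replicate i c) = some p :=
    fun i => Option.isSome_iff_exists.mp (H i)
  obtain ⟨b, j2, _, hlt, heq⟩ := exists_lt_map_eq
    (fun i => ((runF M q (replicate i c)).getD (q, [])).1) (Fintype.card M.Q) le_rfl 0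
  obtain ⟨⟨q1, o0⟩, hb⟩ := st b
  obtain ⟨⟨q1', o1⟩, hj2⟩ := st j2
  have hq1 : q1' = q1 := by
    have h := heq
    simp only [hb, hj2, Option.getD_some] at h
    exact h.symm
  rw [hq1] at hj2
  set ρ := j2 - b with hρdef
  have hρ : 1 ≤ ρ := by omega
  have hsplit : replicate j2 c = replicate b c ++ replicate ρ c := by
    rw [← replicate_add]; congr 1; omega
  rw [hsplit] at hj2
  obtain ⟨q1'', o1', z0, h1', hloop, _⟩ := runF_append_parts hj2
  rw [hb] at h1'
  simp only [Option.some.injEq, Prod.mk.injEq] at h1'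
  obtain ⟨h1a, h1b⟩ := h1'
  rw [← h1a] at hloop
  refine ⟨b, ρ, q1, o0, z0, hρ, fun j => ?_⟩
  have : replicate (b + j * ρ) c = replicate b c ++ lpow (replicate ρ c) j := by
    rw [lpow_replicate, ← replicate_add]
  rw [this]
  exact runF_append_some hb (runF_lpow hloop j)

/-- The two-block pumping lemma: a common arithmetic progression `A + t•P` of block lengths
along which both the `0`-block from `q` and the following `1`-block run periodically. -/
lemma pairPump (M : OracleMealy Bool Bool) (q : M.Q)
    (H : ∀ m, 1 ≤ m → (runF M q (replicate m false ++ replicate m true)).isSome) :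
    ∃ A P q1 q2 α x β y, 1 ≤ A ∧ 1 ≤ P ∧
      (∀ t, runF M q (replicate (A + t * P) false) = some (q1, α ++ lpow x t)) ∧
      (∀ t, runF M q1 (replicate (A + t * P) true) = some (q2, β ++ lpow y t)) := by
  letI := M.fintypeQ
  have H0 : ∀ i, (runF M q (replicate i false)).isSome := by
    intro i
    rcases Nat.eq_zero_or_pos i with rfl | hi
    · rfl
    · exact isSome_left_of_append (H i hi)
  obtain ⟨b, ρ, q1, o0, z0, hρ, hIter⟩ := pump_block M q false H0
  have H1 : ∀ j, 1 ≤ j → (runF M q1 (replicate (b + j * ρ) true)).isSome := by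
    intro j hj
    have hm : 1 ≤ b + j * ρ := by
      have : 1 * 1 ≤ j * ρ := Nat.mul_le_mul hj hρ
      omega
    exact isSome_right_of_append (H (b + j * ρ) hm) (hIter j)
  obtain ⟨j1, j2, hj1, hjlt, hjeq⟩ := exists_lt_map_eq
    (fun j => ((runF M q1 (replicate (b + j * ρ) true)).getD (q1, [])).1)
    (Fintype.card M.Q) le_rfl 1
  obtain ⟨⟨q2, bet⟩, hq2⟩ := Option.isSome_iff_exists.mp (H1 j1 hj1)
  obtain ⟨⟨q2', bet'⟩, hq2'⟩ := Option.isSome_iff_exists.mp (H1 j2 (by omega))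
  have hq2eq : q2' = q2 := by
    have h := hjeq
    simp only [hq2, hq2', Option.getD_some] at h
    exact h.symm
  rw [hq2eq] at hq2'
  obtain ⟨Δ, hΔ⟩ : ∃ Δ, j2 = j1 + Δ ∧ 1 ≤ Δ := ⟨j2 - j1, by omega⟩
  obtain ⟨hΔ1, hΔ2⟩ := hΔ
  subst hΔ1
  set A := b + j1 * ρ with hAdef
  set P := Δ * ρ with hPdef
  have hA : 1 ≤ A := by
    have : 1 * 1 ≤ j1 * ρ := Nat.mul_le_mul hj1 hρ
    omega
  have hP : 1 ≤ P := by
    have : 1 * 1 ≤ Δ * ρ := Nat.mul_le_mul hΔ2 hρ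
    omega
  -- extract the loop output on the 1-block
  have hsplit : replicate (b + (j1 + Δ) * ρ) true = replicate A true ++ replicate P true := by
    rw [← replicate_add]; congr 1; ring
  rw [hsplit] at hq2'
  obtain ⟨q2'', bet'', y, hy1, hy2, _⟩ := runF_append_parts hq2'
  rw [hq2] at hy1
  simp only [Option.some.injEq, Prod.mk.injEq] at hy1
  obtain ⟨hy1a, hy1b⟩ := hy1
  rw [← hy1a] at hy2
  refine ⟨A, P, q1, q2, o0 ++ lpow z0 j1, lpow z0 Δ, bet, y, hA, hP, fun t => ?_, fun t => ?_⟩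
  · have harith : A + t * P = b + (j1 + t * Δ) * ρ := by
      rw [hAdef, hPdef]; ring
    rw [harith, hIter (j1 + t * Δ), lpow_add, lpow_mul]
    simp [append_assoc]
  · have hsplit2 : replicate (A + t * P) true = replicate A true ++ lpow (replicate P true) t := by
      rw [lpow_replicate, ← replicate_add]
    rw [hsplit2]
    exact runF_append_some hq2 (runF_lpow hy2 t)

end MealyAux

namespace MealyAux
open List

lemma main : ¬ MealyTTReducible LsharpSq Lsharp := by
  rintro ⟨M, hM⟩
  classical
  have runDef : ∀ w ∈ LsharpSq, (runF M M.q0 w).isSome := by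
    intro w hw
    obtain ⟨p, o, hr, -⟩ := (hM w).mp hw
    rw [run_eq_runF] at hr
    simp [hr]
  have Hq0 : ∀ m, 1 ≤ m → (runF M M.q0 (replicate m false ++ replicate m true)).isSome := by
    intro m hm
    have h := runDef _ (mem_LsharpSq hm (le_refl 1))
    rw [show replicate m false ++ (replicate m true ++ (replicate 1 false ++ replicate 1 true))
        = (replicate m false ++ replicate m true) ++ (replicate 1 false ++ replicate 1 true) from
        by simp [append_assoc]] at h
    exact isSome_left_of_append h
  obtain ⟨A, P, q1, q2, al, x, be, y, hA, hP, h1, h2⟩ := pairPump M M.q0 Hq0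
  have h10 : runF M M.q0 (replicate A false) = some (q1, al) := by simpa using h1 0
  have h20 : runF M q1 (replicate A true) = some (q2, be) := by simpa using h2 0
  have Hq2 : ∀ m, 1 ≤ m → (runF M q2 (replicate m false ++ replicate m true)).isSome := by
    intro m hm
    have h := runDef _ (mem_LsharpSq hA hm)
    have h' := isSome_right_of_append h h10
    exact isSome_right_of_append h' h20
  obtain ⟨B, R, q3, q4, ga, z, de, w, hB, hR, h3, h4⟩ := pairPump M q2 Hq2
  have h40 : runF M q3 (replicate B true) = some (q4, de) := by simpa using h4 0
  -- run values on the three word families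
  have hD : ∀ t u, runF M M.q0 (replicate (A + t*P) false ++ (replicate (A + t*P) true ++
      (replicate (B + u*R) false ++ replicate (B + u*R) true)))
      = some (q4, al ++ (lpow x t ++ (be ++ (lpow y t ++ (ga ++ (lpow z u ++
          (de ++ lpow w u))))))) := by
    intro t u
    have e := runF_append_some (h1 t) (runF_append_some (h2 t)
      (runF_append_some (h3 u) (h4 u)))
    simpa [append_assoc] using e
  have hE : ∀ t u, runF M M.q0 (replicate (A + t*P) false ++ (replicate A true ++
      (replicate (B + u*R) false ++ replicate (B + u*R) true)))
      = some (q4, al ++ (lpow x t ++ (be ++ (ga ++ (lpow z u ++ (de ++ lpow w u)))))) := by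
    intro t u
    have e := runF_append_some (h1 t) (runF_append_some h20
      (runF_append_some (h3 u) (h4 u)))
    simpa [append_assoc] using e
  have hG : ∀ t u, runF M M.q0 (replicate (A + t*P) false ++ (replicate (A + t*P) true ++
      (replicate (B + u*R) false ++ replicate B true)))
      = some (q4, al ++ (lpow x t ++ (be ++ (lpow y t ++ (ga ++ (lpow z u ++ de)))))) := by
    intro t u
    have e := runF_append_some (h1 t) (runF_append_some (h2 t)
      (runF_append_some (h3 u) h40))
    simpa [append_assoc] using e
  -- acceptance of the diagonal family
  have accD : ∀ t u, M.tt q4 (fun i => decide ((al ++ (lpow x t ++ (be ++ (lpow y t ++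
      (ga ++ (lpow z u ++ (de ++ lpow w u))))))) ++ M.suf q4 i ∈ Lsharp)) = true := by
    intro t u
    obtain ⟨p, o, hr, htt⟩ := (hM _).mp
      (mem_LsharpSq (show 1 ≤ A + t*P by omega) (show 1 ≤ B + u*R by omega))
    rw [run_eq_runF, hD t u] at hr
    simp only [Option.some.injEq, Prod.mk.injEq] at hr
    obtain ⟨rfl, rfl⟩ := hr
    exact htt
  -- rejection of the two off-diagonal families
  have rejE : ∀ t u, 1 ≤ t → M.tt q4 (fun i => decide ((al ++ (lpow x t ++ (be ++
      (ga ++ (lpow z u ++ (de ++ lpow w u)))))) ++ M.suf q4 i ∈ Lsharp)) = false := by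
    intro t u ht
    have htP : 1 * 1 ≤ t * P := Nat.mul_le_mul ht hP
    have hnm : (replicate (A + t*P) false ++ (replicate A true ++
        (replicate (B + u*R) false ++ replicate (B + u*R) true))) ∉ LsharpSq :=
      notMem_LsharpSq (by omega) hA (by omega) (by omega) (Or.inl (by omega))
    cases hF : M.tt q4 (fun i => decide ((al ++ (lpow x t ++ (be ++
        (ga ++ (lpow z u ++ (de ++ lpow w u)))))) ++ M.suf q4 i ∈ Lsharp)) with
    | false => rfl
    | true =>
      exact absurd ((hM _).mpr ⟨q4, _, by rw [run_eq_runF]; exact hE t u, hF⟩) hnm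
  have rejG : ∀ t u, 1 ≤ u → M.tt q4 (fun i => decide ((al ++ (lpow x t ++ (be ++
      (lpow y t ++ (ga ++ (lpow z u ++ de)))))) ++ M.suf q4 i ∈ Lsharp)) = false := by
    intro t u hu
    have huR : 1 * 1 ≤ u * R := Nat.mul_le_mul hu hR
    have hnm : (replicate (A + t*P) false ++ (replicate (A + t*P) true ++
        (replicate (B + u*R) false ++ replicate B true))) ∉ LsharpSq :=
      notMem_LsharpSq (by omega) (by omega) (by omega) hB (Or.inr (by omega))
    cases hF : M.tt q4 (fun i => decide ((al ++ (lpow x t ++ (be ++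
        (lpow y t ++ (ga ++ (lpow z u ++ de)))))) ++ M.suf q4 i ∈ Lsharp)) with
    | false => rfl
    | true =>
      exact absurd ((hM _).mpr ⟨q4, _, by rw [run_eq_runF]; exact hG t u, hF⟩) hnm
  -- the pumped segments are nonempty
  have hx : x ≠ [] := by
    intro hxe
    have t1 := accD 0 1
    have t2 := rejE 1 1 le_rfl
    rw [hxe] at t2
    simp only [lpow_zero, lpow_one, nil_append, append_nil] at t1 t2
    rw [t1] at t2
    simp at t2
  have hy : y ≠ [] := by
    intro hye
    have t1 := accD 1 1
    have t2 := rejE 1 1 le_rfl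
    rw [hye] at t1
    simp only [lpow_zero, lpow_one, nil_append, append_nil] at t1 t2
    rw [t1] at t2
    simp at t2
  have hz : z ≠ [] := by
    intro hze
    have t1 := accD 1 0
    have t2 := rejG 1 1 le_rfl
    rw [hze] at t2
    simp only [lpow_zero, lpow_one, nil_append, append_nil] at t1 t2
    rw [t1] at t2
    simp at t2
  have hw : w ≠ [] := by
    intro hwe
    have t1 := accD 1 1
    have t2 := rejG 1 1 le_rfl
    rw [hwe] at t1
    simp only [lpow_zero, lpow_one, nil_append, append_nil] at t1 t2
    rw [t1] at t2
    simp at t2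
  -- each E-query can only succeed for one pumping exponent ≥ 2
  have badb : ∀ i : Fin (M.numSuf q4), ∃ bi : ℕ, ∀ t, 2 ≤ t →
      (al ++ (lpow x t ++ (be ++ (ga ++ (lpow z 1 ++ (de ++ lpow w 1)))))) ++ M.suf q4 i
        ∈ Lsharp → t = bi := by
    intro i
    by_cases hex : ∃ t, 2 ≤ t ∧
      (al ++ (lpow x t ++ (be ++ (ga ++ (lpow z 1 ++ (de ++ lpow w 1)))))) ++ M.suf q4 i
        ∈ Lsharp
    · obtain ⟨t0, ht0, hm0⟩ := hex
      refine ⟨t0, fun t ht hm => ?_⟩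
      rcases lt_trichotomy t t0 with h' | h' | h'
      · exact absurd (pump_unique hx ht h' (by simpa [append_assoc] using hm)
          (by simpa [append_assoc] using hm0)) not_false
      · exact h'
      · exact absurd (pump_unique hx ht0 h' (by simpa [append_assoc] using hm0)
          (by simpa [append_assoc] using hm)) not_false
    · exact ⟨0, fun t ht hm => absurd ⟨t, ht, hm⟩ hex⟩
  choose bfun hbfun using badb
  obtain ⟨t₀, ht₀I, ht₀n⟩ : ∃ t₀, t₀ ∈ Finset.Icc 2 (2 + M.numSuf q4) ∧
      t₀ ∉ Finset.image bfun Finset.univ := by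
    by_contra hcon
    push_neg at hcon
    have hsub : Finset.Icc 2 (2 + M.numSuf q4) ⊆ Finset.image bfun Finset.univ :=
      fun t ht => hcon t ht
    have hc1 := Finset.card_le_card hsub
    have hc2 := Finset.card_image_le (f := bfun) (s := Finset.univ)
    rw [Nat.card_Icc] at hc1
    simp only [Finset.card_univ, Fintype.card_fin] at hc2
    omega
  have ht₀2 : 2 ≤ t₀ := (Finset.mem_Icc.mp ht₀I).1
  -- the truth table rejects the all-false answer vector
  have hFfalse : M.tt q4 (fun _ => false) = false := by
    have hre := rejE t₀ 1 (by omega)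
    convert hre using 2
    funext i
    refine (decide_eq_false fun hm => ?_).symm
    exact ht₀n (Finset.mem_image.mpr ⟨i, Finset.mem_univ i, (hbfun i t₀ ht₀2 hm).symm⟩)
  -- every diagonal word has at least one true oracle answer
  have exMemD1 : ∀ t, ∃ i, (al ++ (lpow x t ++ (be ++ (lpow y t ++ (ga ++ (lpow z 1 ++
      (de ++ lpow w 1))))))) ++ M.suf q4 i ∈ Lsharp := by
    intro t
    by_contra hcon
    push_neg at hcon
    have h2' := accD t 1
    have h3' : M.tt q4 (fun _ => false) = true := by
      rw [← h2']
      congr 1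
      funext i
      exact (decide_eq_false (hcon i)).symm
    rw [hFfalse] at h3'
    simp at h3'
  obtain ⟨ta, tb, hta, htab, hiab⟩ := exists_lt_map_eq
    (fun t => (exMemD1 t).choose) (M.numSuf q4) (by simp) 2
  have ma := (exMemD1 ta).choose_spec
  have mb := (exMemD1 tb).choose_spec
  rw [← hiab] at mb
  -- structure: everything after the y-part is all ones, in particular z and w
  have hTail : ∀ c ∈ ga ++ (lpow z 1 ++ (de ++ (lpow w 1 ++ M.suf q4 (exMemD1 ta).choose))),
      c = true := by
    apply pump2_structure (c₀ := al) (c₁ := be) hx hy hta htab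
    · simpa [append_assoc] using ma
    · simpa [append_assoc] using mb
  have hzT : ∀ c ∈ z, c = true := fun c hc =>
    hTail c (mem_append_right _ (mem_append_left _ (by rw [lpow_one]; exact hc)))
  have hwT : ∀ c ∈ w, c = true := fun c hc =>
    hTail c (mem_append_right _ (mem_append_right _ (mem_append_right _
      (mem_append_left _ (by rw [lpow_one]; exact hc)))))
  -- pump in the second coordinate: slope contradiction
  have exMemD2 : ∀ u, ∃ i, (al ++ (lpow x 1 ++ (be ++ (lpow y 1 ++ (ga ++ (lpow z u ++
      (de ++ lpow w u))))))) ++ M.suf q4 i ∈ Lsharp := by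
    intro u
    by_contra hcon
    push_neg at hcon
    have h2' := accD 1 u
    have h3' : M.tt q4 (fun _ => false) = true := by
      rw [← h2']
      congr 1
      funext i
      exact (decide_eq_false (hcon i)).symm
    rw [hFfalse] at h3'
    simp at h3'
  obtain ⟨ua, ub, hua, huab, hjab⟩ := exists_lt_map_eq
    (fun u => (exMemD2 u).choose) (M.numSuf q4) (by simp) 2
  have na := (exMemD2 ua).choose_spec
  have nb := (exMemD2 ub).choose_spec
  rw [← hjab] at nb
  have hsl := pump2_slope (c₀ := al ++ (lpow x 1 ++ (be ++ (lpow y 1 ++ ga)))) (c₁ := de)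
    (c₂ := M.suf q4 (exMemD2 ua).choose) huab
    (by simpa [append_assoc] using na) (by simpa [append_assoc] using nb)
  rw [count_false_of_allT hzT, count_false_of_allT hwT,
      count_true_of_allT hzT, count_true_of_allT hwT] at hsl
  have hzl : z.length ≠ 0 := by simpa using hz
  omega

end MealyAux

/-- `L_# · L_#` is not truth-table reducible by a Mealy machine to `L_#`. -/
theorem LsharpSq_not_mealyTTReducible_Lsharp : ¬ MealyTTReducible LsharpSq Lsharp :=
  MealyAux.main
end
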